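/- Let r > 2/3, let u_b ∈ (6/5, 4/3) satisfy K(u_b;r) = 0, and let s ∈ ℝ with s ≠ 2 and s ≠ u_b. Define h₁(u) = (2 − u)/(u − s) and h₂(u) = g(1 + √((r + u − 2)/(r + 1/10)), u)/(u − s). Then h₁(2) = 0, h₂(u_b) = 0, h₁ is differentiable at u = 2, h₂ is differentiable at u = u_b, and the two derivatives h₁′(2) and h₂′(u_b) are both negative if and only if s < u_b. (That is, the equilibria X₁ and X₂ of the slow subsystem are both sinks if and only if s < u_b(r).) -/

import Mathlib

/-!
Clearing denominators, `K(u;r) = 0` says `4 (u-1)² (r+u-2) = (4-3u)² (r+1/10)`. For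
`u ∈ (6/5, 4/3)` one has `0 < 4-3u < 2(u-1)`, which forces `r + 1/10 > 0` and identifies the
square root on the right branch with `(4-3u)/(2(u-1))`; hence `q = (2-u)/(2(u-1))` there, which
is exactly the zero of `g(·,u)`. Both slow vector fields have the form `N(u)/(u-s)` with `N`
vanishing at the equilibrium, so their derivatives there are `N'/(u-s)`. Since `N' = -1` for `h₁`
and `N' = -1 + 2(q'(1-u) - q) < 0` for `h₂`, the derivatives are negative iff `s < 2` and
`s < u_b` respectively, and `u_b < 2`.
-/

noncomputable section

/-- Reaction term `g(q,u)` of the pipe-flow model. -/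
def gq (q u : ℝ) : ℝ := 2 - u + 2*q*(1 - u)

/-- The cubic `K(u;r)`. -/
def Kc (u r : ℝ) : ℝ := 40*u^3 - (50*r + 169)*u^2 + (160*r + 224)*u - 120*r - 96

open Set

theorem hasDerivAt_div_sub_of_eq_zero {f : ℝ → ℝ} {f' a s : ℝ} (hf : HasDerivAt f f' a)
    (hfa : f a = 0) (has : a ≠ s) :
    HasDerivAt (fun u => f u / (u - s)) (f' / (a - s)) a := by
  have hden : a - s ≠ 0 := sub_ne_zero.2 has
  refine (hf.div ((hasDerivAt_id' a).sub_const s) hden).congr_deriv ?_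
  rw [hfa]
  field_simp
  ring

theorem div_sub_neg_iff {n a s : ℝ} (hn : n < 0) : n / (a - s) < 0 ↔ s < a := by
  rw [← neg_pos, ← neg_div, div_pos_iff_of_pos_left (neg_pos.2 hn), sub_pos]

theorem hasDerivAt_gq_comp {q : ℝ → ℝ} {q' u : ℝ} (hq : HasDerivAt q q' u) :
    HasDerivAt (fun v => gq (q v) v) (-1 + 2 * (q' * (1 - u) - q u)) u := by
  have hlin : HasDerivAt (fun v : ℝ => 2 - v) (-1) u := (hasDerivAt_id' u).const_sub 2
  have hprod : HasDerivAt (fun v => q v * (1 - v)) (q' * (1 - u) + q u * -1) u :=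
    hq.mul ((hasDerivAt_id' u).const_sub 1)
  have hfun : (fun v => gq (q v) v) = (fun v => 2 - v) + fun v => 2 * (q v * (1 - v)) := by
    ext v
    simp only [gq, Pi.add_apply]
    ring
  rw [hfun]
  exact (hlin.add (hprod.const_mul 2)).congr_deriv (by ring)

/-- The `q`-coordinate of the right branch of the parabola `M₂` over `u`. -/
def qRight (r u : ℝ) : ℝ := 1 + √((r + u - 2) / (r + 1/10))

theorem hasDerivAt_qRight {r u : ℝ} (h : (r + u - 2) / (r + 1/10) ≠ 0) :
    HasDerivAt (qRight r) (1 / (r + 1/10) / (2 * √((r + u - 2) / (r + 1/10)))) u := by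
  have hratio : HasDerivAt (fun v : ℝ => (r + v - 2) / (r + 1/10)) (1 / (r + 1/10)) u :=
    (((hasDerivAt_id' u).const_add r).sub_const 2).div_const (r + 1/10)
  exact (hratio.sqrt h).const_add 1

theorem Kc_eq (u r : ℝ) :
    Kc u r = 10 * (4 * (u - 1)^2 * (r + u - 2) - (4 - 3*u)^2 * (r + 1/10)) := by
  simp only [Kc]; ring

section Equilibrium

variable {u r : ℝ}

theorem add_pos_of_Kc_eq_zero (hu : u ∈ Ioo (6/5 : ℝ) (4/3)) (hK : Kc u r = 0) :
    0 < r + 1/10 := by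
  obtain ⟨hu₁, hu₂⟩ := hu
  rw [Kc_eq] at hK
  by_contra! hB
  -- `(4-3u)² < 4(u-1)²` makes the right side of `K = 0` strictly larger than the left.
  have hsq : (4 - 3*u)^2 < 4 * (u - 1)^2 := by nlinarith
  nlinarith [mul_le_mul_of_nonpos_right hsq.le hB, sq_nonneg (u - 1)]

theorem div_eq_sq_of_Kc_eq_zero (hu : u ∈ Ioo (6/5 : ℝ) (4/3)) (hK : Kc u r = 0) :
    (r + u - 2) / (r + 1/10) = ((4 - 3*u) / (2 * (u - 1)))^2 := by
  have hB := add_pos_of_Kc_eq_zero hu hK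
  have hu₁ : u - 1 ≠ 0 := by linarith [hu.1]
  rw [Kc_eq] at hK
  rw [div_pow, div_eq_div_iff hB.ne' (by positivity)]
  linear_combination hK / 10

theorem sqrt_div_of_Kc_eq_zero (hu : u ∈ Ioo (6/5 : ℝ) (4/3)) (hK : Kc u r = 0) :
    √((r + u - 2) / (r + 1/10)) = (4 - 3*u) / (2 * (u - 1)) := by
  rw [div_eq_sq_of_Kc_eq_zero hu hK, Real.sqrt_sq]
  exact div_nonneg (by linarith [hu.2]) (by linarith [hu.1])

theorem qRight_of_Kc_eq_zero (hu : u ∈ Ioo (6/5 : ℝ) (4/3)) (hK : Kc u r = 0) :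
    qRight r u = (2 - u) / (2 * (u - 1)) := by
  have hu₁ : u - 1 ≠ 0 := by linarith [hu.1]
  rw [qRight, sqrt_div_of_Kc_eq_zero hu hK]
  field_simp
  ring

theorem gq_qRight_of_Kc_eq_zero (hu : u ∈ Ioo (6/5 : ℝ) (4/3)) (hK : Kc u r = 0) :
    gq (qRight r u) u = 0 := by
  have hu₁ : u - 1 ≠ 0 := by linarith [hu.1]
  rw [qRight_of_Kc_eq_zero hu hK, gq]
  field_simp
  ring

theorem exists_hasDerivAt_gq_qRight_neg (hu : u ∈ Ioo (6/5 : ℝ) (4/3)) (hK : Kc u r = 0) :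
    ∃ n < 0, HasDerivAt (fun v => gq (qRight r v) v) n u := by
  have hB := add_pos_of_Kc_eq_zero hu hK
  have hd : 0 < (4 - 3*u) / (2 * (u - 1)) := div_pos (by linarith [hu.2]) (by linarith [hu.1])
  have hratio : (r + u - 2) / (r + 1/10) ≠ 0 := by
    rw [div_eq_sq_of_Kc_eq_zero hu hK]; positivity
  have hq' : 0 ≤ 1 / (r + 1/10) / (2 * √((r + u - 2) / (r + 1/10))) :=
    div_nonneg (one_div_nonneg.2 hB.le) (by positivity)
  have hq : 0 < qRight r u := by
    rw [qRight, sqrt_div_of_Kc_eq_zero hu hK]; linarith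
  refine ⟨_, ?_, hasDerivAt_gq_comp (hasDerivAt_qRight hratio)⟩
  nlinarith [mul_nonneg hq' (sub_nonneg.2 hu.1.le)]

end Equilibrium

theorem stmt3_general (r ub s : ℝ) (hub : ub ∈ Set.Ioo (6/5 : ℝ) (4/3))
    (hK : Kc ub r = 0) (hs2 : s ≠ 2) (hsub : s ≠ ub) :
    let h1 : ℝ → ℝ := fun u => (2 - u) / (u - s)
    let h2 : ℝ → ℝ := fun u =>
      gq (1 + Real.sqrt ((r + u - 2) / (r + 1/10))) u / (u - s)
    h1 2 = 0 ∧ h2 ub = 0 ∧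
    DifferentiableAt ℝ h1 2 ∧ DifferentiableAt ℝ h2 ub ∧
    ((deriv h1 2 < 0 ∧ deriv h2 ub < 0) ↔ s < ub) := by
  intro h1 h2
  have hg : gq (qRight r ub) ub = 0 := gq_qRight_of_Kc_eq_zero hub hK
  have hD1 : HasDerivAt h1 (-1 / (2 - s)) 2 :=
    hasDerivAt_div_sub_of_eq_zero ((hasDerivAt_id' 2).const_sub 2)
      (sub_self 2) (Ne.symm hs2)
  obtain ⟨n, hn, hN⟩ := exists_hasDerivAt_gq_qRight_neg hub hK
  have hD2 : HasDerivAt h2 (n / (ub - s)) ub :=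
    hasDerivAt_div_sub_of_eq_zero hN hg (Ne.symm hsub)
  refine ⟨by simp [h1], (show gq (qRight r ub) ub / (ub - s) = 0 by rw [hg, zero_div]),
    hD1.differentiableAt, hD2.differentiableAt, ?_⟩
  rw [hD1.deriv, hD2.deriv, div_sub_neg_iff neg_one_lt_zero, div_sub_neg_iff hn]
  exact ⟨And.right, fun h => ⟨h.trans (by linarith [hub.2]), h⟩⟩

theorem stmt3 (r ub s : ℝ) (hr : 2/3 < r) (hub : ub ∈ Set.Ioo (6/5 : ℝ) (4/3))
    (hK : Kc ub r = 0) (hs2 : s ≠ 2) (hsub : s ≠ ub) :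
    let h1 : ℝ → ℝ := fun u => (2 - u) / (u - s)
    let h2 : ℝ → ℝ := fun u =>
      gq (1 + Real.sqrt ((r + u - 2) / (r + 1/10))) u / (u - s)
    h1 2 = 0 ∧ h2 ub = 0 ∧
    DifferentiableAt ℝ h1 2 ∧ DifferentiableAt ℝ h2 ub ∧
    ((deriv h1 2 < 0 ∧ deriv h2 ub < 0) ↔ s < ub) :=
  stmt3_general r ub s hub hK hs2 hsub
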